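/- Let d ≥ 1, let A and A' be nonempty finite alphabets, and let X ⊆ A^{ℤ^d} and X' ⊆ (A')^{ℤ^d} be aperiodic minimal subshifts. Suppose h : SX → SX' is a topological conjugacy, i.e. a homeomorphism with h(t +ᵥ T) = t +ᵥ h(T) for all t ∈ ℝ^d and T ∈ SX. Then there exist constants m, M > 0 and natural numbers a, b, N such that for all n ≥ max(N, a): m · p_X(n − a) ≤ p_{X'}(n) ≤ M · p_X(n + b). -/

import Mathlib

open Filter Topology

abbrev Zd (d : ℕ) := Fin d → ℤ
abbrev Rd (d : ℕ) := EuclideanSpace ℝ (Fin d)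

def toRd {d : ℕ} (n : Zd d) : Rd d := WithLp.toLp 2 (fun i => (n i : ℝ))

def shift {d : ℕ} {A : Type*} (n : Zd d) (ω : Zd d → A) : Zd d → A := fun k => ω (k - n)

structure IsSubshift {d : ℕ} {A : Type*} [TopologicalSpace A] (X : Set (Zd d → A)) : Prop where
  nonempty : X.Nonempty
  closed : IsClosed X
  shift_mem : ∀ n : Zd d, ∀ ω ∈ X, shift n ω ∈ X

def IsMinimal {d : ℕ} {A : Type*} [TopologicalSpace A] (X : Set (Zd d → A)) : Prop :=
  ∀ ω ∈ X, X ⊆ closure {ω' | ∃ n : Zd d, ω' = shift n ω}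

def IsAperiodic {d : ℕ} {A : Type*} (X : Set (Zd d → A)) : Prop :=
  ∀ ω ∈ X, ∀ n : Zd d, shift n ω = ω → n = 0

def suspRel {d : ℕ} {A : Type*} [TopologicalSpace A] (X : Set (Zd d → A)) :
    X × Rd d → X × Rd d → Prop :=
  fun p q => ∃ n : Zd d, (q.1 : Zd d → A) = shift n (p.1 : Zd d → A) ∧ q.2 = p.2 - toRd n

abbrev Susp {d : ℕ} {A : Type*} [TopologicalSpace A] (X : Set (Zd d → A)) :=
  Quot (suspRel X)

instance {d : ℕ} {A : Type*} [TopologicalSpace A] (X : Set (Zd d → A)) :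
    VAdd (Rd d) (Susp X) where
  vadd t := Quot.lift (fun p => Quot.mk (suspRel X) (p.1, p.2 + t))
    (fun p q hpq => by
      obtain ⟨n, h1, h2⟩ := hpq
      exact Quot.sound ⟨n, h1, by rw [h2]; first | exact sub_add_eq_add_sub _ _ _ | abel⟩)

def iota {d : ℕ} {A : Type*} [TopologicalSpace A] (X : Set (Zd d → A)) : X → Susp X :=
  fun ω => Quot.mk _ (ω, 0)

def box (d : ℕ) (n : ℕ) : Set (Zd d) := {k | ∀ i, |k i| ≤ (n : ℤ)}

noncomputable def complexity {d : ℕ} {A : Type*} (X : Set (Zd d → A)) (n : ℕ) : ℕ :=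
  Set.ncard ((fun ω => (fun k : box d n => ω k.1)) '' X)

noncomputable def repetitivity {d : ℕ} {A : Type*} (X : Set (Zd d → A)) (n : ℕ) : ℝ :=
  sInf {C : ℝ | 0 ≤ C ∧ ∀ ω ∈ X, ∀ ω₀ ∈ X, ∃ k : Zd d,
    ‖toRd k‖ ≤ C ∧ ∀ j ∈ box d n, shift k ω j = ω₀ j}

def IsCocycleFor {d : ℕ} {A A' : Type*} [TopologicalSpace A] [TopologicalSpace A']
    {X : Set (Zd d → A)} {X' : Set (Zd d → A')}
    (h : Susp X ≃ₜ Susp X') (c : Susp X × Rd d → Rd d) : Prop :=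
  ∀ (T : Susp X) (x : Rd d), h (x +ᵥ T) = c (T, x) +ᵥ h T


/-!
The symbol of `X'` seen at the origin of `h [ω, v]` is a locally constant function of `ω`
wherever `h [ω, v]` lies off the faces of the unit cells; on the compact set of `ω` for which it
stays `1/4` away from them, it is therefore determined by the pattern of `ω` on one fixed box
`B_r`. Every point of `SX'` is of this form for one of the `2^d` offsets `v ∈ {0, 1/2}^d`, and
equivariance turns the reading at the origin into the reading at any lattice site `k`. So a
pattern of `X'` on `B_n` is determined by an offset and a pattern of `X` on `B_{n+r}`, whence
`p_{X'}(n) ≤ 2^d p_X(n + r)`; the other inequality is the same argument applied to `h⁻¹`.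
-/

open Set

section Lattice

variable {d : ℕ}

noncomputable def zfloor (x : Rd d) : Zd d := fun i => ⌊x i⌋

theorem zfloor_add_toRd (x : Rd d) (n : Zd d) : zfloor (x + toRd n) = zfloor x + n :=
  funext fun i => Int.floor_add_intCast (x i) (n i)

def farFromGrid (δ : ℝ) : Set (Rd d) := {x | ∀ i, ∀ n : ℤ, δ ≤ |x i - n|}

def offGrid : Set (Rd d) := {x | ∀ i, (zfloor x i : ℝ) < x i}

theorem add_toRd_mem_farFromGrid_iff {δ : ℝ} {x : Rd d} (k : Zd d) :
    x + toRd k ∈ farFromGrid δ ↔ x ∈ farFromGrid δ := by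
  refine forall_congr' fun i => ⟨fun hx n => ?_, fun hx n => ?_⟩
  · convert hx (n + k i) using 2
    simp [toRd]
  · convert hx (n - k i) using 2
    simp [toRd]
    ring

theorem add_toRd_mem_offGrid_iff {x : Rd d} (k : Zd d) :
    x + toRd k ∈ offGrid ↔ x ∈ offGrid := by
  refine forall_congr' fun i => ?_
  rw [zfloor_add_toRd]
  simp [toRd]

theorem isClosed_farFromGrid (δ : ℝ) : IsClosed (farFromGrid (d := d) δ) := by
  simp only [farFromGrid, ofPred_forall]
  exact isClosed_iInter fun i => isClosed_iInter fun n =>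
    isClosed_le continuous_const (by fun_prop)

theorem farFromGrid_subset_offGrid {δ : ℝ} (hδ : 0 < δ) : farFromGrid (d := d) δ ⊆ offGrid :=
  fun x hx i => (Int.floor_le (x i)).lt_of_ne fun hfl => by
    have := hx i ⌊x i⌋
    rw [hfl, sub_self, abs_zero] at this
    linarith

theorem exists_bool_quarter_le_abs_sub_int (y : ℝ) :
    ∃ b : Bool, ∀ n : ℤ, 1 / 4 ≤ |(if b then 1 / 2 else 0) - y - n| := by
  by_cases hy : ∀ n : ℤ, 1 / 4 ≤ |0 - y - n|
  · exact ⟨false, hy⟩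
  push Not at hy
  obtain ⟨m, hm⟩ := hy
  refine ⟨true, fun n => ?_⟩
  have half_le : (1 / 2 : ℝ) ≤ |1 / 2 + ((m - n : ℤ) : ℝ)| := by
    rcases le_or_gt 0 (m - n) with hmn | hmn
    · have : (0 : ℝ) ≤ ((m - n : ℤ) : ℝ) := by exact_mod_cast hmn
      rw [abs_of_nonneg (by linarith)]
      linarith
    · have : ((m - n : ℤ) : ℝ) ≤ -1 := by exact_mod_cast Int.le_sub_one_of_lt hmn
      rw [abs_of_neg (by linarith)]
      linarith
  rw [show (0 : ℝ) - y - m = -(y + m) by ring, abs_neg] at hm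
  have := abs_sub_abs_le_abs_sub (1 / 2 + ((m - n : ℤ) : ℝ)) (y + m)
  simp only [if_true]
  push_cast at half_le this ⊢
  rw [show 1 / 2 + (m - n : ℝ) - (y + m) = 1 / 2 - y - n by ring] at this
  linarith

end Lattice

section Suspension

variable {d : ℕ} {A : Type*} [TopologicalSpace A] {X : Set (Zd d → A)}

def IsSubshift.shift (hX : IsSubshift X) (k : Zd d) (ω : X) : X :=
  ⟨_root_.shift k ω, hX.shift_mem k ω ω.2⟩

theorem vadd_mk (t : Rd d) (p : X × Rd d) :
    t +ᵥ Quot.mk (suspRel X) p = Quot.mk _ (p.1, p.2 + t) := rfl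

theorem mk_shift (hX : IsSubshift X) (k : Zd d) (ω : X) (x : Rd d) :
    Quot.mk (suspRel X) (hX.shift k ω, x) = Quot.mk _ (ω, x + toRd k) :=
  (Quot.sound ⟨k, rfl, (add_sub_cancel_right x (toRd k)).symm⟩).symm

-- The symbol of the tile of `[ω, x]` that contains the origin.
noncomputable def suspLabel : Susp X → A :=
  Quot.lift (fun p => (p.1 : Zd d → A) (-zfloor p.2)) fun p q ⟨n, hω, hx⟩ => by
    simp only [hω, eq_add_of_sub_eq hx.symm, zfloor_add_toRd, shift, neg_add']

theorem suspLabel_mk (ω : X) (x : Rd d) :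
    suspLabel (Quot.mk (suspRel X) (ω, x)) = (ω : Zd d → A) (-zfloor x) := rfl

variable (X) in
def suspFarFromGrid (δ : ℝ) : Set (Susp X) :=
  {T | Quot.lift (fun p => p.2 ∈ farFromGrid δ) (fun p q ⟨n, _, hx⟩ => by
    rw [eq_add_of_sub_eq hx.symm, add_toRd_mem_farFromGrid_iff]) T}

variable (X) in
def suspOffGrid : Set (Susp X) :=
  {T | Quot.lift (fun p => p.2 ∈ offGrid) (fun p q ⟨n, _, hx⟩ => by
    rw [eq_add_of_sub_eq hx.symm, add_toRd_mem_offGrid_iff]) T}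

theorem mk_mem_suspFarFromGrid_iff {δ : ℝ} {p : X × Rd d} :
    Quot.mk _ p ∈ suspFarFromGrid X δ ↔ p.2 ∈ farFromGrid δ := Iff.rfl

theorem isClosed_suspFarFromGrid (δ : ℝ) : IsClosed (suspFarFromGrid X δ) :=
  isQuotientMap_quot_mk.isClosed_preimage.1 ((isClosed_farFromGrid δ).preimage continuous_snd)

theorem suspFarFromGrid_subset_suspOffGrid {δ : ℝ} (hδ : 0 < δ) :
    suspFarFromGrid X δ ⊆ suspOffGrid X := by
  rintro ⟨p⟩ hp
  exact farFromGrid_subset_offGrid hδ hp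

theorem isOpen_suspOffGrid_inter_suspLabel [DiscreteTopology A] (a : A) :
    IsOpen (suspOffGrid X ∩ suspLabel ⁻¹' {a}) := by
  refine isQuotientMap_quot_mk.isOpen_preimage.1 (isOpen_iff_mem_nhds.2 ?_)
  rintro ⟨ω, x⟩ ⟨hx, ha⟩
  set m := zfloor x
  have hcell : ∀ᶠ q : X × Rd d in 𝓝 (ω, x), ∀ i, q.2 i ∈ Ioo (m i : ℝ) (m i + 1) :=
    eventually_all.2 fun i =>
      (by fun_prop : Continuous fun q : X × Rd d => q.2 i).continuousAt.eventually
        (isOpen_Ioo.mem_nhds ⟨hx i, Int.lt_floor_add_one _⟩)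
  have hsymbol : ∀ᶠ q : X × Rd d in 𝓝 (ω, x), (q.1 : Zd d → A) (-m) = a :=
    ((continuous_apply (-m)).comp (continuous_subtype_val.comp continuous_fst)).continuousAt
      |>.preimage_mem_nhds ((isOpen_discrete {a}).mem_nhds ha)
  filter_upwards [hcell, hsymbol] with q hq hqa
  have hfl : zfloor q.2 = m := funext fun i => Int.floor_eq_iff.2 ⟨(hq i).1.le, (hq i).2⟩
  refine ⟨fun i => ?_, ?_⟩
  · rw [hfl]
    exact (hq i).1
  · change (q.1 : Zd d → A) (-zfloor q.2) = a
    rwa [hfl]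

theorem eventually_suspLabel_eq [DiscreteTopology A] {T : Susp X} (hT : T ∈ suspOffGrid X) :
    ∀ᶠ T' in 𝓝 T, suspLabel T' = suspLabel T :=
  Filter.mem_of_superset ((isOpen_suspOffGrid_inter_suspLabel _).mem_nhds ⟨hT, rfl⟩)
    fun _ hT' => hT'.2

end Suspension

section Box

variable {d : ℕ}

theorem box_finite (d n : ℕ) : (box d n).Finite :=
  (Set.Finite.pi fun _ => Set.finite_Icc (-(n : ℤ)) n).subset fun _ hk i _ => abs_le.1 (hk i)

instance (d n : ℕ) : Finite (box d n) := (box_finite d n).to_subtype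

theorem box_mono {m n : ℕ} (hmn : m ≤ n) : box d m ⊆ box d n :=
  fun k hk i => (hk i).trans (by exact_mod_cast hmn)

theorem add_mem_box {k l : Zd d} {m n : ℕ} (hk : k ∈ box d m) (hl : l ∈ box d n) :
    k + l ∈ box d (m + n) := fun i => by
  push_cast
  exact (abs_add_le _ _).trans (add_le_add (hk i) (hl i))

theorem exists_subset_box (I : Finset (Zd d)) : ∃ r, (I : Set (Zd d)) ⊆ box d r :=
  ⟨I.sup fun k => Finset.univ.sup fun i => (k i).natAbs, fun k hk i => by
    rw [Int.abs_eq_natAbs]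
    exact_mod_cast (Finset.le_sup (f := fun i => (k i).natAbs) (Finset.mem_univ i)).trans
      (Finset.le_sup (f := fun k : Zd d => Finset.univ.sup fun i => (k i).natAbs) hk)⟩

variable {A : Type*} [TopologicalSpace A] {S : Set (Zd d → A)}

theorem setOf_eqOn_box_mem_nhds [DiscreteTopology A] (ω : S) (r : ℕ) :
    {η : S | EqOn (η : Zd d → A) ω (box d r)} ∈ 𝓝 ω := by
  have : (box d r).pi (fun l => {(ω : Zd d → A) l}) ∈ 𝓝 (ω : Zd d → A) :=
    set_pi_mem_nhds (box_finite d r) fun l _ => (isOpen_discrete _).mem_nhds rfl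
  exact continuous_subtype_val.continuousAt.preimage_mem_nhds this

theorem exists_box_of_mem_nhds {U : Set S} {ω : S} (hU : U ∈ 𝓝 ω) :
    ∃ r, ∀ η : S, EqOn (η : Zd d → A) ω (box d r) → η ∈ U := by
  obtain ⟨u, hu, huU⟩ := (mem_nhds_subtype S ω U).1 hU
  rw [nhds_pi, Filter.mem_pi'] at hu
  obtain ⟨I, t, ht, hIu⟩ := hu
  obtain ⟨r, hIr⟩ := exists_subset_box I
  refine ⟨r, fun η hη => huU (hIu fun l hl => ?_)⟩
  rw [hη (hIr hl)]
  exact mem_of_mem_nhds (ht l)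

theorem IsCompact.exists_box_eqOn_imp_eq [DiscreteTopology A] {β : Type*} {K : Set S}
    (hK : IsCompact K) {F : S → β} (hF : ∀ ω ∈ K, ∀ᶠ η in 𝓝 ω, F η = F ω) :
    ∃ r, ∀ ω ∈ K, ∀ η : S, EqOn (η : Zd d → A) ω (box d r) → F η = F ω := by
  choose! ρ hρ using fun ω hω => exists_box_of_mem_nhds (hF ω hω)
  obtain ⟨t, htK, hKt⟩ := hK.elim_nhds_subcover
    (fun ω => {η : S | EqOn (η : Zd d → A) ω (box d (ρ ω))}) fun ω _ => setOf_eqOn_box_mem_nhds ω _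
  refine ⟨t.sup ρ, fun ω hω η hη => ?_⟩
  obtain ⟨z, hz, hωz⟩ := mem_iUnion₂.1 (hKt hω)
  have hρz : EqOn (η : Zd d → A) ω (box d (ρ z)) := hη.mono (box_mono (Finset.le_sup hz))
  rw [hρ z (htK z hz) ω hωz, hρ z (htK z hz) η (hρz.trans hωz)]

end Box

theorem card_range_le_of_determined {α β γ δ ι : Type*} [Finite ι] [Finite γ] {f : α → γ}
    {g : β → δ} (R : ι → α → β → Prop) (hcover : ∀ y, ∃ i x, R i x y)
    (hdet : ∀ i x₁ x₂ y₁ y₂, R i x₁ y₁ → R i x₂ y₂ → f x₁ = f x₂ → g y₁ = g y₂) :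
    Nat.card (range g) ≤ Nat.card ι * Nat.card (range f) := by
  have hcode : ∀ c : range g, ∃ q : ι × range f, ∃ x y, R q.1 x y ∧ f x = q.2 ∧ g y = c := by
    rintro ⟨_, y, rfl⟩
    obtain ⟨i, x, hxy⟩ := hcover y
    exact ⟨(i, ⟨f x, x, rfl⟩), x, y, hxy, rfl, rfl⟩
  choose code x y hR hf hg using hcode
  rw [← Nat.card_prod]
  refine Nat.card_le_card_of_injective code fun c₁ c₂ hc => Subtype.ext ?_
  rw [← hg c₁, ← hg c₂]
  refine hdet _ _ _ _ _ (hR c₁) (by rw [hc]; exact hR c₂) ?_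
  rw [hf, hf, hc]

theorem complexity_eq_card_range {d : ℕ} {A : Type*} (X : Set (Zd d → A)) (n : ℕ) :
    complexity X n = Nat.card (range fun ω : X => (box d n).domRestrict (ω : Zd d → A)) := by
  rw [complexity, image_eq_range, Nat.card_coe_set_eq]
  rfl

section Conjugacy

variable {d : ℕ} {A A' : Type*} [TopologicalSpace A] [TopologicalSpace A']
  {X : Set (Zd d → A)} {X' : Set (Zd d → A')}

noncomputable def halfVertex (b : Fin d → Bool) : Rd d :=
  WithLp.toLp 2 fun i => if b i then 1 / 2 else 0

theorem exists_halfVertex_sub_mem_farFromGrid (s : Rd d) :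
    ∃ b, halfVertex b - s ∈ farFromGrid (1 / 4) := by
  choose b hb using fun i => exists_bool_quarter_le_abs_sub_int (s i)
  exact ⟨b, hb⟩

noncomputable def conjLabel (h : Susp X ≃ₜ Susp X') (v : Rd d) (ω : X) : A' :=
  suspLabel (h (Quot.mk _ (ω, v)))

def MapsIntoCell (h : Susp X ≃ₜ Susp X') (δ : ℝ) (v : Rd d) (ω : X) (ω' : X') : Prop :=
  ∃ x, zfloor x = 0 ∧ x ∈ farFromGrid δ ∧ h (Quot.mk _ (ω, v)) = Quot.mk _ (ω', x)

theorem continuous_mk_left (v : Rd d) : Continuous fun ω : X => Quot.mk (suspRel X) (ω, v) :=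
  continuous_quot_mk.comp (continuous_id.prodMk continuous_const)

variable (h : Susp X ≃ₜ Susp X')

theorem exists_box_conjLabel_eq [Finite A] [DiscreteTopology A] [DiscreteTopology A']
    (hX : IsSubshift X) (v : Rd d) {δ : ℝ} (hδ : 0 < δ) :
    ∃ r, ∀ ω : X, h (Quot.mk _ (ω, v)) ∈ suspFarFromGrid X' δ →
      ∀ η : X, EqOn (η : Zd d → A) ω (box d r) → conjLabel h v η = conjLabel h v ω := by
  have : CompactSpace X := isCompact_iff_compactSpace.1 hX.closed.isCompact
  have hcont := h.continuous.comp (continuous_mk_left (X := X) v)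
  refine ((isClosed_suspFarFromGrid δ).preimage hcont).isCompact.exists_box_eqOn_imp_eq
    fun ω hω => ?_
  exact hcont.continuousAt.eventually
    (eventually_suspLabel_eq (suspFarFromGrid_subset_suspOffGrid hδ hω))

theorem exists_mapsIntoCell (hX : IsSubshift X)
    (hequiv : ∀ (t : Rd d) (T : Susp X), h (t +ᵥ T) = t +ᵥ h T) (ω' : X') :
    ∃ b, ∃ ω : X, MapsIntoCell h (1 / 4) (halfVertex b) ω ω' := by
  obtain ⟨⟨ω₀, s⟩, hs⟩ := Quot.exists_rep (h.symm (Quot.mk (suspRel X') (ω', 0)))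
  obtain ⟨b, hb⟩ := exists_halfVertex_sub_mem_farFromGrid s
  set m := zfloor (halfVertex b - s)
  set x := halfVertex b - s + toRd (-m)
  refine ⟨b, hX.shift (-m) ω₀, x, by rw [zfloor_add_toRd, add_neg_cancel],
    (add_toRd_mem_farFromGrid_iff _).2 hb, ?_⟩
  calc h (Quot.mk _ (hX.shift (-m) ω₀, halfVertex b))
      = h (x +ᵥ Quot.mk _ (ω₀, s)) := by
        rw [mk_shift, vadd_mk]
        congr 3
        simp only [x]
        abel
    _ = x +ᵥ Quot.mk (suspRel X') (ω', 0) := by rw [hequiv, hs, h.apply_symm_apply]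
    _ = Quot.mk _ (ω', x) := by rw [vadd_mk, zero_add]

theorem MapsIntoCell.shift (hX : IsSubshift X)
    (hequiv : ∀ (t : Rd d) (T : Susp X), h (t +ᵥ T) = t +ᵥ h T) {δ : ℝ} {v : Rd d} {ω : X}
    {ω' : X'} (hω : MapsIntoCell h δ v ω ω') (k : Zd d) :
    conjLabel h v (hX.shift (-k) ω) = (ω' : Zd d → A') k ∧
      h (Quot.mk _ (hX.shift (-k) ω, v)) ∈ suspFarFromGrid X' δ := by
  obtain ⟨x, hx0, hxδ, hx⟩ := hω
  have hmk : h (Quot.mk _ (hX.shift (-k) ω, v)) = Quot.mk _ (ω', x + toRd (-k)) := by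
    rw [mk_shift, show Quot.mk (suspRel X) (ω, v + toRd (-k)) = toRd (-k) +ᵥ Quot.mk _ (ω, v)
      from rfl, hequiv, hx, vadd_mk]
  refine ⟨?_, ?_⟩
  · rw [conjLabel, hmk, suspLabel_mk, zfloor_add_toRd, hx0, zero_add, neg_neg]
  · rw [hmk, mk_mem_suspFarFromGrid_iff, add_toRd_mem_farFromGrid_iff]
    exact hxδ

theorem MapsIntoCell.eqOn_box (hX : IsSubshift X)
    (hequiv : ∀ (t : Rd d) (T : Susp X), h (t +ᵥ T) = t +ᵥ h T) {δ : ℝ} {v : Rd d} {r : ℕ}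
    (hr : ∀ ω : X, h (Quot.mk _ (ω, v)) ∈ suspFarFromGrid X' δ →
      ∀ η : X, EqOn (η : Zd d → A) ω (box d r) → conjLabel h v η = conjLabel h v ω)
    {n : ℕ} {ω₁ ω₂ : X} {ω₁' ω₂' : X'} (h₁ : MapsIntoCell h δ v ω₁ ω₁')
    (h₂ : MapsIntoCell h δ v ω₂ ω₂') (heq : EqOn (ω₁ : Zd d → A) ω₂ (box d (n + r))) :
    EqOn (ω₁' : Zd d → A') ω₂' (box d n) := by
  intro k hk
  obtain ⟨hlabel₁, hgood⟩ := h₁.shift h hX hequiv k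
  obtain ⟨hlabel₂, -⟩ := h₂.shift h hX hequiv k
  rw [← hlabel₁, ← hlabel₂]
  refine (hr _ hgood _ fun l hl => (heq ?_).symm).symm
  rw [sub_neg_eq_add, add_comm l k]
  exact add_mem_box hk hl

theorem exists_complexity_le_of_conj [Finite A] [DiscreteTopology A] [DiscreteTopology A']
    (hX : IsSubshift X) (hequiv : ∀ (t : Rd d) (T : Susp X), h (t +ᵥ T) = t +ᵥ h T) :
    ∃ r, ∀ n, complexity X' n ≤ 2 ^ d * complexity X (n + r) := by
  choose r hr using fun b =>
    exists_box_conjLabel_eq h hX (halfVertex b) (by norm_num : (0 : ℝ) < 1 / 4)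
  refine ⟨Finset.univ.sup r, fun n => ?_⟩
  have hbox : ∀ b, box d (n + r b) ⊆ box d (n + Finset.univ.sup r) := fun b =>
    box_mono (Nat.add_le_add_left (Finset.le_sup (Finset.mem_univ b)) n)
  have key := card_range_le_of_determined
    (f := fun ω : X => (box d (n + Finset.univ.sup r)).domRestrict (ω : Zd d → A))
    (g := fun ω' : X' => (box d n).domRestrict (ω' : Zd d → A'))
    (fun b => MapsIntoCell h (1 / 4) (halfVertex b)) (exists_mapsIntoCell h hX hequiv)
    fun b _ _ _ _ h₁ h₂ heq => domRestrict_eq_domRestrict_iff.2 <|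
      h₁.eqOn_box h hX hequiv (hr b) h₂ <| (domRestrict_eq_domRestrict_iff.1 heq).mono (hbox b)
  rw [complexity_eq_card_range, complexity_eq_card_range]
  simpa using key

end Conjugacy

theorem frank_sadun_conjugacy_complexity_general
    {d : ℕ}
    {A A' : Type*} [Fintype A] [TopologicalSpace A] [DiscreteTopology A]
    [Fintype A'] [TopologicalSpace A'] [DiscreteTopology A']
    (X : Set (Zd d → A)) (X' : Set (Zd d → A'))
    (hX : IsSubshift X) (hX' : IsSubshift X')
    (h : Susp X ≃ₜ Susp X')
    (hequiv : ∀ (t : Rd d) (T : Susp X), h (t +ᵥ T) = t +ᵥ h T) :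
    ∃ m M : ℝ, 0 < m ∧ 0 < M ∧ ∃ a b N : ℕ, ∀ n : ℕ, max N a ≤ n →
      m * (complexity X (n - a) : ℝ) ≤ (complexity X' n : ℝ) ∧
      (complexity X' n : ℝ) ≤ M * (complexity X (n + b) : ℝ) := by
  obtain ⟨r, hr⟩ := exists_complexity_le_of_conj h hX hequiv
  obtain ⟨r', hr'⟩ := exists_complexity_le_of_conj h.symm hX' fun t T' =>
    h.symm_apply_eq.2 (by rw [hequiv, h.apply_symm_apply])
  refine ⟨(2 ^ d)⁻¹, 2 ^ d, by positivity, by positivity, r', r, 0, fun n hn => ⟨?_, ?_⟩⟩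
  · have hle := hr' (n - r')
    rw [Nat.sub_add_cancel (le_of_max_le_right hn)] at hle
    rw [inv_mul_le_iff₀ (by positivity)]
    exact_mod_cast hle
  · exact_mod_cast hr n

theorem frank_sadun_conjugacy_complexity
    {d : ℕ} (hd : 1 ≤ d)
    {A A' : Type*} [Fintype A] [Nonempty A] [TopologicalSpace A] [DiscreteTopology A]
    [Fintype A'] [Nonempty A'] [TopologicalSpace A'] [DiscreteTopology A']
    (X : Set (Zd d → A)) (X' : Set (Zd d → A'))
    (hX : IsSubshift X) (hX' : IsSubshift X')
    (hXmin : IsMinimal X) (hX'min : IsMinimal X')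
    (hXap : IsAperiodic X) (hX'ap : IsAperiodic X')
    (h : Susp X ≃ₜ Susp X')
    (hequiv : ∀ (t : Rd d) (T : Susp X), h (t +ᵥ T) = t +ᵥ h T) :
    ∃ m M : ℝ, 0 < m ∧ 0 < M ∧ ∃ a b N : ℕ, ∀ n : ℕ, max N a ≤ n →
      m * (complexity X (n - a) : ℝ) ≤ (complexity X' n : ℝ) ∧
      (complexity X' n : ℝ) ≤ M * (complexity X (n + b) : ℝ) :=
  frank_sadun_conjugacy_complexity_general X X' hX hX' h hequiv
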